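/- arXiv:1106.4119 — 4 statements merged into one kernel-verified Lean document; each statement's English description precedes it below -/
import Mathlib

section
/- Let T be a locally finite tree without ends and ξ₁,ξ₂,ξ₃,ξ₄ four pairwise distinct boundary points. Then c(ξ₁,ξ₂,ξ₃,ξ₄) = e^{−L}, where L is the signed length of the intersection [ξ₁,ξ₂] ∩ [ξ₃,ξ₄] of the bi-infinite geodesics, the sign depending on whether the orientations induced from (ξ₁ to ξ₂) and (ξ₃ to ξ₄) on the common segment agree. -/
/-!
In a tree, a vertex has exactly one neighbour closer to any fixed base point. Hence once a
non-backtracking walk takes a step away from a vertex it keeps moving away from it, and two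
non-backtracking walks leaving a common vertex along different edges are at distance `m + n` after
`m` and `n` steps.

For two rays from `x₀` this gives `d(r(L + m), s(L + n)) = m + n`, `L` being their overlap, so
twice an overlap is determined by the distances between far-out points of the two rays. The four
legs of `g` and `h` leaving the common segment are such pairs of walks as well, which computes the
same distances in terms of `ℓ`; in the cross-ratio the contributions of the far-out points cancel
and only `ℓ` remains. Reversing `h` swaps `ξ₃` and `ξ₄`, which inverts the cross-ratio and
reduces the case of opposite orientations to that of agreeing ones.
-/

open SimpleGraph

variable {V : Type*}

/-- A geodesic ray in the graph `G` starting at the vertex `x`. -/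
structure TreeRay (G : SimpleGraph V) (x : V) where
  toFun : ℕ → V
  init : toFun 0 = x
  adj : ∀ n, G.Adj (toFun n) (toFun (n + 1))
  isGeodesic : ∀ n, G.dist x (toFun n) = n

/-- Two rays (possibly with different base points) represent the same boundary
point if they eventually coincide (up to a shift of parameter). -/
def RayEquiv {G : SimpleGraph V} {x y : V} (r : TreeRay G x) (s : TreeRay G y) : Prop :=
  ∃ a b : ℕ, ∀ n, r.toFun (n + a) = s.toFun (n + b)

/-- The length of the common initial segment of two geodesic rays from the same
base point. -/
noncomputable def rayOverlap {G : SimpleGraph V} {x : V} (r s : TreeRay G x) : ℕ :=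
  sSup {n | r.toFun n = s.toFun n}

/-- The visual metric `ρ_{x}` on the boundary of a tree:
`ρ_x(ξ,η) = e^{−L}` where `L` is the length of `[x,ξ] ∩ [x,η]`, and `ρ_x(ξ,ξ) = 0`. -/
noncomputable def rho {G : SimpleGraph V} {x : V} (r s : TreeRay G x) : ℝ :=
  letI := Classical.decEq (TreeRay G x)
  if r = s then 0 else Real.exp (-(rayOverlap r s : ℝ))

/-- The cross-ratio of four boundary points with respect to the base point `x`. -/
noncomputable def crossRatio {G : SimpleGraph V} {x : V} (ξ₁ ξ₂ ξ₃ ξ₄ : TreeRay G x) : ℝ :=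
  (rho ξ₃ ξ₁ * rho ξ₄ ξ₂) / (rho ξ₃ ξ₂ * rho ξ₄ ξ₁)

/-- A locally finite tree is *without ends* if every vertex has valency at least two
(equivalently, the complement of every vertex is disconnected). -/
def NoEnds (G : SimpleGraph V) [G.LocallyFinite] : Prop :=
  ∀ v : V, 2 ≤ G.degree v

/-- A bi-infinite geodesic in the graph `G`. -/
structure BiGeodesic (G : SimpleGraph V) where
  toFun : ℤ → V
  adj : ∀ n : ℤ, G.Adj (toFun n) (toFun (n + 1))
  isGeodesic : ∀ m n : ℤ, (G.dist (toFun m) (toFun n) : ℤ) = |m - n|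

/-- The positive end of the bi-infinite geodesic `g` is the boundary point `ξ`. -/
def BiGeodesic.PosEnd {G : SimpleGraph V} {x : V} (g : BiGeodesic G) (ξ : TreeRay G x) : Prop :=
  ∃ (a : ℤ) (b : ℕ), ∀ n : ℕ, g.toFun (a + n) = ξ.toFun (b + n)

/-- The negative end of the bi-infinite geodesic `g` is the boundary point `ξ`. -/
def BiGeodesic.NegEnd {G : SimpleGraph V} {x : V} (g : BiGeodesic G) (ξ : TreeRay G x) : Prop :=
  ∃ (a : ℤ) (b : ℕ), ∀ n : ℕ, g.toFun (a - n) = ξ.toFun (b + n)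


namespace SimpleGraph

variable {G : SimpleGraph V}

def IsNonBacktracking (G : SimpleGraph V) (f : ℕ → V) : Prop :=
  ∀ k, G.Adj (f k) (f (k + 1)) ∧ f k ≠ f (k + 2)

theorem IsTree.eq_of_adj_of_dist_add_one (hG : G.IsTree) (u : V) {v w w' : V}
    (hw : G.Adj w v) (hw' : G.Adj w' v)
    (h : G.dist u w + 1 = G.dist u v) (h' : G.dist u w' + 1 = G.dist u v) : w = w' := by
  obtain ⟨p, hp⟩ := hG.connected.exists_walk_length_eq_dist u w
  obtain ⟨p', hp'⟩ := hG.connected.exists_walk_length_eq_dist u w'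
  have hq : (p.concat hw).IsPath := Walk.isPath_of_length_eq_dist _ (by simp [hp, h])
  have hq' : (p'.concat hw').IsPath := Walk.isPath_of_length_eq_dist _ (by simp [hp', h'])
  have := congrArg Subtype.val ((hG.isAcyclic.subsingleton_path u v).elim ⟨_, hq⟩ ⟨_, hq'⟩)
  simpa using congrArg Walk.penultimate this

theorem IsTree.dist_add_of_isNonBacktracking (hG : G.IsTree) (u : V) {f : ℕ → V}
    (hf : G.IsNonBacktracking f) (h₁ : G.dist u (f 1) = G.dist u (f 0) + 1) (n : ℕ) :
    G.dist u (f n) = G.dist u (f 0) + n := by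
  suffices ∀ n, G.dist u (f n) = G.dist u (f 0) + n ∧
      G.dist u (f (n + 1)) = G.dist u (f 0) + (n + 1) from (this n).1
  intro n
  induction n with
  | zero => exact ⟨rfl, h₁⟩
  | succ n ih =>
    refine ⟨ih.2, ?_⟩
    rcases hG.dist_eq_dist_add_one_of_adj u (hf (n + 1)).1 with h | h
    · exact absurd (hG.eq_of_adj_of_dist_add_one u (hf n).1 (hf (n + 1)).1.symm
        (by omega) (by omega)) (hf n).2
    · omega

theorem IsTree.dist_of_isNonBacktracking (hG : G.IsTree) {f : ℕ → V}
    (hf : G.IsNonBacktracking f) (n : ℕ) : G.dist (f 0) (f n) = n := by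
  simpa using hG.dist_add_of_isNonBacktracking (f 0) hf (by simpa using (hf 0).1) n

theorem IsTree.dist_eq_add_of_diverge (hG : G.IsTree) {α β : ℕ → V}
    (hα : G.IsNonBacktracking α) (hβ : G.IsNonBacktracking β)
    (h₀ : α 0 = β 0) (h₁ : α 1 ≠ β 1) (m n : ℕ) : G.dist (α m) (β n) = m + n := by
  have hα₀ : G.dist (α m) (α 0) = m := by rw [dist_comm, hG.dist_of_isNonBacktracking hα]
  suffices h : G.dist (α m) (β 1) = m + 1 by
    rw [hG.dist_add_of_isNonBacktracking (α m) hβ (by rw [← h₀, hα₀, h]) n, ← h₀, hα₀]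
  rcases hG.dist_eq_dist_add_one_of_adj (α m) (hβ 0).1 with h | h <;>
    simp only [zero_add, ← h₀, hα₀] at h
  · obtain ⟨m, rfl⟩ : ∃ k, m = k + 1 := Nat.exists_eq_add_one.mpr (by omega)
    have hα₁ : G.dist (α 1) (α (m + 1)) = m :=
      hG.dist_of_isNonBacktracking (f := fun k => α (k + 1)) (fun k => hα (k + 1)) m
    rw [dist_comm] at hα₁
    refine absurd (hG.eq_of_adj_of_dist_add_one (α (m + 1))
      (show G.Adj (α 1) (α 0) from (hα 0).1.symm) ?_ ?_ ?_) h₁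
    · exact h₀ ▸ (hβ 0).1.symm
    · omega
    · omega
  · omega

end SimpleGraph

namespace TreeRay

variable {G : SimpleGraph V} {x : V}

theorem injective (r : TreeRay G x) : Function.Injective r.toFun := fun m n h => by
  rw [← r.isGeodesic m, h, r.isGeodesic]

theorem isNonBacktracking_add (r : TreeRay G x) (n : ℕ) :
    G.IsNonBacktracking fun k => r.toFun (n + k) :=
  fun k => ⟨r.adj (n + k), fun h => by have := r.injective h; omega⟩

theorem toFun_eq_of_le (hG : G.IsTree) {r s : TreeRay G x} {n : ℕ}
    (hn : r.toFun n = s.toFun n) {k : ℕ} (hk : k ≤ n) : r.toFun k = s.toFun k := by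
  refine Nat.decreasingInduction (motive := fun k _ => r.toFun k = s.toFun k)
    (fun k _ ih => ?_) hn hk
  exact hG.eq_of_adj_of_dist_add_one x (r.adj k) (ih ▸ s.adj k)
    (by rw [r.isGeodesic, r.isGeodesic]) (by rw [s.isGeodesic, r.isGeodesic])

theorem bddAbove_setOf_toFun_eq (hG : G.IsTree) {r s : TreeRay G x} (hrs : r ≠ s) :
    BddAbove {n | r.toFun n = s.toFun n} := by
  contrapose! hrs
  obtain ⟨r, _, _, _⟩ := r
  obtain ⟨s, _, _, _⟩ := s
  congr
  funext k
  obtain ⟨n, hn, hkn⟩ := not_bddAbove_iff.mp hrs k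
  exact toFun_eq_of_le hG hn hkn.le

theorem toFun_rayOverlap (hG : G.IsTree) {r s : TreeRay G x} (hrs : r ≠ s) :
    r.toFun (rayOverlap r s) = s.toFun (rayOverlap r s) :=
  Nat.sSup_mem ⟨0, by simp [r.init, s.init]⟩ (bddAbove_setOf_toFun_eq hG hrs)

theorem le_rayOverlap (hG : G.IsTree) {r s : TreeRay G x} (hrs : r ≠ s) {n : ℕ}
    (hn : r.toFun n = s.toFun n) : n ≤ rayOverlap r s :=
  le_csSup (bddAbove_setOf_toFun_eq hG hrs) hn

theorem dist_rayOverlap_add (hG : G.IsTree) {r s : TreeRay G x} (hrs : r ≠ s) (m n : ℕ) :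
    G.dist (r.toFun (rayOverlap r s + m)) (s.toFun (rayOverlap r s + n)) = m + n :=
  hG.dist_eq_add_of_diverge (r.isNonBacktracking_add _) (s.isNonBacktracking_add _)
    (toFun_rayOverlap hG hrs)
    (fun h => absurd (le_rayOverlap hG hrs (n := rayOverlap r s + 1) h) (by omega)) m n

theorem two_mul_rayOverlap_eq (hG : G.IsTree) {r s : TreeRay G x} (hrs : r ≠ s)
    {y z : ℕ → V} {p q p' q' c : ℕ} (hr : ∀ k, r.toFun (p + k) = y (q + k))
    (hs : ∀ k, s.toFun (p' + k) = z (q' + k)) (hyz : ∀ m n, G.dist (y m) (z n) = m + n + c) :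
    2 * (rayOverlap r s : ℤ) = p + p' - q - q' - c := by
  have h := dist_rayOverlap_add hG hrs p p'
  rw [add_comm _ p, add_comm _ p', hr, hs, hyz] at h
  omega

end TreeRay

section CrossRatio

variable {G : SimpleGraph V} {x : V}

theorem rho_of_ne {r s : TreeRay G x} (hrs : r ≠ s) :
    rho r s = Real.exp (-(rayOverlap r s : ℝ)) :=
  if_neg hrs

theorem crossRatio_of_ne {ξ₁ ξ₂ ξ₃ ξ₄ : TreeRay G x}
    (h₃₁ : ξ₃ ≠ ξ₁) (h₄₂ : ξ₄ ≠ ξ₂) (h₃₂ : ξ₃ ≠ ξ₂) (h₄₁ : ξ₄ ≠ ξ₁) :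
    crossRatio ξ₁ ξ₂ ξ₃ ξ₄ = Real.exp (-((rayOverlap ξ₃ ξ₁ + rayOverlap ξ₄ ξ₂ : ℝ)
      - (rayOverlap ξ₃ ξ₂ + rayOverlap ξ₄ ξ₁))) := by
  rw [crossRatio, rho_of_ne h₃₁, rho_of_ne h₄₂, rho_of_ne h₃₂, rho_of_ne h₄₁,
    ← Real.exp_add, ← Real.exp_add, ← Real.exp_sub]
  ring_nf

theorem crossRatio_swap₃₄ (ξ₁ ξ₂ ξ₃ ξ₄ : TreeRay G x) :
    crossRatio ξ₁ ξ₂ ξ₄ ξ₃ = (crossRatio ξ₁ ξ₂ ξ₃ ξ₄)⁻¹ := by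
  rw [crossRatio, crossRatio, inv_div, mul_comm (rho ξ₄ ξ₁), mul_comm (rho ξ₄ ξ₂)]

theorem crossRatio_eq_exp_of_dist_legs (hT : G.IsTree) {ξ₁ ξ₂ ξ₃ ξ₄ : TreeRay G x}
    (h₃₁ : ξ₃ ≠ ξ₁) (h₄₂ : ξ₄ ≠ ξ₂) (h₃₂ : ξ₃ ≠ ξ₂) (h₄₁ : ξ₄ ≠ ξ₁) {y₁ y₂ y₃ y₄ : ℕ → V}
    (e₁ : ∃ p q : ℕ, ∀ k, ξ₁.toFun (p + k) = y₁ (q + k))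
    (e₂ : ∃ p q : ℕ, ∀ k, ξ₂.toFun (p + k) = y₂ (q + k))
    (e₃ : ∃ p q : ℕ, ∀ k, ξ₃.toFun (p + k) = y₃ (q + k))
    (e₄ : ∃ p q : ℕ, ∀ k, ξ₄.toFun (p + k) = y₄ (q + k)) {c₃₁ c₄₂ c₃₂ c₄₁ : ℕ}
    (d₃₁ : ∀ m n, G.dist (y₃ m) (y₁ n) = m + n + c₃₁)
    (d₄₂ : ∀ m n, G.dist (y₄ m) (y₂ n) = m + n + c₄₂)
    (d₃₂ : ∀ m n, G.dist (y₃ m) (y₂ n) = m + n + c₃₂)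
    (d₄₁ : ∀ m n, G.dist (y₄ m) (y₁ n) = m + n + c₄₁) :
    crossRatio ξ₁ ξ₂ ξ₃ ξ₄ = Real.exp ((c₃₁ + c₄₂ - c₃₂ - c₄₁ : ℝ) / 2) := by
  obtain ⟨p₁, q₁, e₁⟩ := e₁
  obtain ⟨p₂, q₂, e₂⟩ := e₂
  obtain ⟨p₃, q₃, e₃⟩ := e₃
  obtain ⟨p₄, q₄, e₄⟩ := e₄
  have L₃₁ := TreeRay.two_mul_rayOverlap_eq hT h₃₁ e₃ e₁ d₃₁
  have L₄₂ := TreeRay.two_mul_rayOverlap_eq hT h₄₂ e₄ e₂ d₄₂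
  have L₃₂ := TreeRay.two_mul_rayOverlap_eq hT h₃₂ e₃ e₂ d₃₂
  have L₄₁ := TreeRay.two_mul_rayOverlap_eq hT h₄₁ e₄ e₁ d₄₁
  have key : 2 * ((rayOverlap ξ₃ ξ₁ + rayOverlap ξ₄ ξ₂ : ℝ)
      - (rayOverlap ξ₃ ξ₂ + rayOverlap ξ₄ ξ₁)) = c₃₂ + c₄₁ - c₃₁ - c₄₂ := by
    exact_mod_cast (by omega : 2 * ((rayOverlap ξ₃ ξ₁ + rayOverlap ξ₄ ξ₂ : ℤ)
      - (rayOverlap ξ₃ ξ₂ + rayOverlap ξ₄ ξ₁)) = c₃₂ + c₄₁ - c₃₁ - c₄₂)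
  rw [crossRatio_of_ne h₃₁ h₄₂ h₃₂ h₄₁, Real.exp_eq_exp]
  linarith

end CrossRatio

namespace BiGeodesic

variable {G : SimpleGraph V}

theorem injective (g : BiGeodesic G) : Function.Injective g.toFun := fun s t h => by
  have := g.isGeodesic s t
  rw [h, SimpleGraph.dist_self, Nat.cast_zero, eq_comm, abs_eq_zero, sub_eq_zero] at this
  exact this

theorem isNonBacktracking_add (g : BiGeodesic G) (u : ℤ) :
    G.IsNonBacktracking fun k : ℕ => g.toFun (u + k) := fun k =>
  ⟨by simpa [add_assoc] using g.adj (u + k), fun h => by have := g.injective h; omega⟩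

theorem isNonBacktracking_sub (g : BiGeodesic G) (u : ℤ) :
    G.IsNonBacktracking fun k : ℕ => g.toFun (u - k) := fun k =>
  ⟨by simpa [sub_add_cancel, sub_add_eq_sub_sub] using (g.adj (u - k - 1)).symm,
    fun h => by have := g.injective h; omega⟩

def reverse (g : BiGeodesic G) : BiGeodesic G where
  toFun n := g.toFun (-n)
  adj n := by simpa [neg_add_eq_sub, sub_add_cancel] using (g.adj (-n - 1)).symm
  isGeodesic m n := by rw [g.isGeodesic, ← abs_neg]; ring_nf

@[simp]
theorem reverse_toFun (g : BiGeodesic G) (n : ℤ) : g.reverse.toFun n = g.toFun (-n) := rfl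

theorem range_reverse (g : BiGeodesic G) : Set.range g.reverse.toFun = Set.range g.toFun :=
  (Equiv.neg ℤ).surjective.range_comp g.toFun

theorem eq_add_sub_of_toFun_eq {g h : BiGeodesic G} {a b : ℤ}
    {ℓ : ℕ} (hcap : Set.range g.toFun ∩ Set.range h.toFun = g.toFun '' Set.Icc a (a + ℓ))
    (hor : ∀ i : ℕ, i ≤ ℓ → g.toFun (a + i) = h.toFun (b + i)) {s t : ℤ}
    (hst : g.toFun s = h.toFun t) : a ≤ s ∧ s ≤ a + ℓ ∧ t = b + (s - a) := by
  obtain ⟨s', ⟨has', hs'a⟩, hs's⟩ : g.toFun s ∈ g.toFun '' Set.Icc a (a + ℓ) :=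
    hcap ▸ ⟨⟨s, rfl⟩, t, hst.symm⟩
  obtain rfl := g.injective hs's
  obtain ⟨i, rfl⟩ : ∃ i : ℕ, s' = a + i := ⟨(s' - a).toNat, by omega⟩
  have := h.injective ((hor i (by omega)).symm.trans hst)
  omega

variable {x : V} {g : BiGeodesic G} {ξ : TreeRay G x}

theorem PosEnd.reverse (hξ : g.PosEnd ξ) : g.reverse.NegEnd ξ := by
  obtain ⟨a, b, h⟩ := hξ
  exact ⟨-a, b, fun n => by simpa [add_comm] using h n⟩

theorem NegEnd.reverse (hξ : g.NegEnd ξ) : g.reverse.PosEnd ξ := by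
  obtain ⟨a, b, h⟩ := hξ
  exact ⟨-a, b, fun n => by simpa [neg_add_eq_sub] using h n⟩

theorem NegEnd.exists_shift (hξ : g.NegEnd ξ) (u : ℤ) :
    ∃ p q : ℕ, ∀ k : ℕ, ξ.toFun (p + k) = g.toFun (u - ↑(q + k)) := by
  obtain ⟨a, b, h⟩ := hξ
  refine ⟨b + (a - u).toNat, (u - a + (a - u).toNat).toNat, fun k => ?_⟩
  rw [add_assoc, ← h]
  congr 1
  omega

theorem PosEnd.exists_shift (hξ : g.PosEnd ξ) (u : ℤ) :
    ∃ p q : ℕ, ∀ k : ℕ, ξ.toFun (p + k) = g.toFun (u + ↑(q + k)) := by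
  obtain ⟨a, b, h⟩ := hξ
  refine ⟨b + (u - a).toNat, (a - u + (u - a).toNat).toNat, fun k => ?_⟩
  rw [add_assoc, ← h]
  congr 1
  omega

end BiGeodesic

theorem crossRatio_eq_exp_neg_of_orientation_agrees {G : SimpleGraph V} (hT : G.IsTree) {x : V}
    {ξ₁ ξ₂ ξ₃ ξ₄ : TreeRay G x}
    (h₁₃ : ξ₁ ≠ ξ₃) (h₁₄ : ξ₁ ≠ ξ₄) (h₂₃ : ξ₂ ≠ ξ₃) (h₂₄ : ξ₂ ≠ ξ₄) {g h : BiGeodesic G}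
    (hg₁ : g.NegEnd ξ₁) (hg₂ : g.PosEnd ξ₂) (hh₃ : h.NegEnd ξ₃) (hh₄ : h.PosEnd ξ₄)
    {a b : ℤ} {ℓ : ℕ}
    (hcap : Set.range g.toFun ∩ Set.range h.toFun = g.toFun '' Set.Icc a (a + ℓ))
    (hor : ∀ i : ℕ, i ≤ ℓ → g.toFun (a + i) = h.toFun (b + i)) :
    crossRatio ξ₁ ξ₂ ξ₃ ξ₄ = Real.exp (-(ℓ : ℝ)) := by
  have meet {s t} := BiGeodesic.eq_add_sub_of_toFun_eq hcap hor (s := s) (t := t)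
  have h₀ : h.toFun b = g.toFun a := by simpa using (hor 0 ℓ.zero_le).symm
  have hℓ : h.toFun (b + ℓ) = g.toFun (a + ℓ) := (hor ℓ le_rfl).symm
  have d₃₁ (m n : ℕ) : G.dist (h.toFun (b - m)) (g.toFun (a - n)) = m + n + 0 :=
    hT.dist_eq_add_of_diverge (h.isNonBacktracking_sub b) (g.isNonBacktracking_sub a)
      (by simpa using h₀) (fun e => by have := meet e.symm; omega) m n
  have d₄₂ (m n : ℕ) : G.dist (h.toFun (b + ℓ + m)) (g.toFun (a + ℓ + n)) = m + n + 0 :=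
    hT.dist_eq_add_of_diverge (h.isNonBacktracking_add _) (g.isNonBacktracking_add _)
      (by simpa using hℓ) (fun e => by have := meet e.symm; omega) m n
  have d₃₂ (m n : ℕ) : G.dist (h.toFun (b - m)) (g.toFun (a + ℓ + n)) = m + n + ℓ := by
    have := hT.dist_eq_add_of_diverge (h.isNonBacktracking_sub b) (g.isNonBacktracking_add a)
      (by simpa using h₀) (fun e => by have := meet e.symm; omega) m (ℓ + n)
    simp only [Nat.cast_add, ← add_assoc] at this
    omega
  have d₄₁ (m n : ℕ) : G.dist (h.toFun (b + ℓ + m)) (g.toFun (a - n)) = m + n + ℓ := by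
    have := hT.dist_eq_add_of_diverge (h.isNonBacktracking_add _) (g.isNonBacktracking_sub (a + ℓ))
      (by simpa using hℓ) (fun e => by have := meet e.symm; omega) m (ℓ + n)
    rw [show a + ℓ - ((ℓ + n : ℕ) : ℤ) = a - n by push_cast; ring] at this
    omega
  rw [crossRatio_eq_exp_of_dist_legs hT h₁₃.symm h₂₄.symm h₂₃.symm h₁₄.symm
    (y₁ := fun n : ℕ => g.toFun (a - n)) (y₂ := fun n : ℕ => g.toFun (a + ℓ + n))
    (y₃ := fun m : ℕ => h.toFun (b - m)) (y₄ := fun m : ℕ => h.toFun (b + ℓ + m))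
    (hg₁.exists_shift a) (hg₂.exists_shift (a + ℓ)) (hh₃.exists_shift b)
    (hh₄.exists_shift (b + ℓ)) d₃₁ d₄₂ d₃₂ d₄₁]
  congr 1
  push_cast
  ring

theorem crossRatio_eq_exp_signed_overlap_general {V : Type*} (G : SimpleGraph V) (hT : G.IsTree)
    (x₀ : V)
    (ξ₁ ξ₂ ξ₃ ξ₄ : TreeRay G x₀)
    (hdist : ξ₁ ≠ ξ₂ ∧ ξ₁ ≠ ξ₃ ∧ ξ₁ ≠ ξ₄ ∧ ξ₂ ≠ ξ₃ ∧ ξ₂ ≠ ξ₄ ∧ ξ₃ ≠ ξ₄)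
    (g h : BiGeodesic G)
    (hg₁ : g.NegEnd ξ₁) (hg₂ : g.PosEnd ξ₂) (hh₃ : h.NegEnd ξ₃) (hh₄ : h.PosEnd ξ₄)
    (a b : ℤ) (ℓ : ℕ)
    (hcap : Set.range g.toFun ∩ Set.range h.toFun = g.toFun '' Set.Icc a (a + ℓ)) :
    ((∀ i : ℕ, i ≤ ℓ → g.toFun (a + i) = h.toFun (b + i)) →
        crossRatio ξ₁ ξ₂ ξ₃ ξ₄ = Real.exp (-(ℓ : ℝ))) ∧
      ((∀ i : ℕ, i ≤ ℓ → g.toFun (a + i) = h.toFun (b + ℓ - i)) →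
        crossRatio ξ₁ ξ₂ ξ₃ ξ₄ = Real.exp (ℓ : ℝ)) := by
  obtain ⟨-, h₁₃, h₁₄, h₂₃, h₂₄, -⟩ := hdist
  refine ⟨crossRatio_eq_exp_neg_of_orientation_agrees hT h₁₃ h₁₄ h₂₃ h₂₄ hg₁ hg₂ hh₃ hh₄ hcap,
    fun hor => ?_⟩
  have hrev := crossRatio_eq_exp_neg_of_orientation_agrees hT h₁₄ h₁₃ h₂₄ h₂₃ hg₁ hg₂
    hh₄.reverse hh₃.reverse (b := -(b + ℓ)) (h.range_reverse ▸ hcap)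
    fun i hi => by rw [BiGeodesic.reverse_toFun, hor i hi]; ring_nf
  rw [← inv_inv (crossRatio ξ₁ ξ₂ ξ₃ ξ₄), ← crossRatio_swap₃₄, hrev, Real.exp_neg, inv_inv]

/-- For four pairwise distinct boundary points `ξ₁,ξ₂,ξ₃,ξ₄` of a locally finite tree
without ends, `c(ξ₁,ξ₂,ξ₃,ξ₄) = e^{−L}` where `L` is the *signed* length of the
intersection `[ξ₁,ξ₂] ∩ [ξ₃,ξ₄]` of the two bi-infinite geodesics: the sign is positive
(`L = ℓ`) if the orientations induced from `(ξ₁ → ξ₂)` and `(ξ₃ → ξ₄)` agree on the common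
segment of length `ℓ`, and negative (`L = −ℓ`) if they disagree. -/
theorem crossRatio_eq_exp_signed_overlap {V : Type*} (G : SimpleGraph V) (hT : G.IsTree)
    [G.LocallyFinite] (hends : NoEnds G) (x₀ : V)
    (ξ₁ ξ₂ ξ₃ ξ₄ : TreeRay G x₀)
    (hdist : ξ₁ ≠ ξ₂ ∧ ξ₁ ≠ ξ₃ ∧ ξ₁ ≠ ξ₄ ∧ ξ₂ ≠ ξ₃ ∧ ξ₂ ≠ ξ₄ ∧ ξ₃ ≠ ξ₄)
    (g h : BiGeodesic G)
    (hg₁ : g.NegEnd ξ₁) (hg₂ : g.PosEnd ξ₂) (hh₃ : h.NegEnd ξ₃) (hh₄ : h.PosEnd ξ₄)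
    (a b : ℤ) (ℓ : ℕ)
    (hcap : Set.range g.toFun ∩ Set.range h.toFun = g.toFun '' Set.Icc a (a + ℓ)) :
    ((∀ i : ℕ, i ≤ ℓ → g.toFun (a + i) = h.toFun (b + i)) →
        crossRatio ξ₁ ξ₂ ξ₃ ξ₄ = Real.exp (-(ℓ : ℝ))) ∧
      ((∀ i : ℕ, i ≤ ℓ → g.toFun (a + i) = h.toFun (b + ℓ - i)) →
        crossRatio ξ₁ ξ₂ ξ₃ ξ₄ = Real.exp (ℓ : ℝ)) :=
  crossRatio_eq_exp_signed_overlap_general G hT x₀ ξ₁ ξ₂ ξ₃ ξ₄ hdist g h hg₁ hg₂ hh₃ hh₄ a b ℓ hcap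
end

section
/- Let T be a locally finite tree and γ an isometry of T with fixed base point x₀, and define j_γ(ξ) = e^{d(x₀,p) − d(p, γ^{-1}x₀)}, where p is the projection of the boundary point ξ onto the geodesic segment [x₀, γ^{-1}x₀]. Then j satisfies the multiplicative cocycle identity: j_{γδ}(ξ) = j_γ(δξ) · j_δ(ξ) for all isometries γ, δ and all ξ ∈ ∂T. -/
/-!
Far enough along the ray `ξ`, a tree gives `d(y, ξₙ) = d(p, y) + n - d(x₀, p)`, where `p` is the
projection of `ξ` on `[x₀, y]`: the ray leaves `[x₀, y]` at `p` and from then on moves away from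
`y`. Hence `log j_γ(ξ) = n - d(γ⁻¹x₀, ξₙ)` for large `n`, a difference of Busemann functions, and
the cocycle identity becomes a telescoping sum once the isometry `δ` carries `ξₙ` to the ray `η`
representing `δξ`.
-/

open SimpleGraph

variable {V : Type*}

/-- An isometric automorphism of the graph `G` (a bijection preserving adjacency,
and hence the path metric). -/
structure GraphAut (G : SimpleGraph V) where
  toFun : V → V
  invFun : V → V
  left_inv : Function.LeftInverse invFun toFun
  right_inv : Function.RightInverse invFun toFun
  adj' : ∀ u v, G.Adj (toFun u) (toFun v) ↔ G.Adj u v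
  dist' : ∀ u v, G.dist (toFun u) (toFun v) = G.dist u v

/-- The image of a geodesic ray under an isometric automorphism. -/
def TreeRay.map {G : SimpleGraph V} {x : V} (f : GraphAut G) (r : TreeRay G x) :
    TreeRay G (f.toFun x) where
  toFun := f.toFun ∘ r.toFun
  init := by simp [r.init]
  adj := fun n => by simpa [f.adj'] using r.adj n
  isGeodesic := fun n => by
    have := r.isGeodesic n
    simpa [Function.comp, ← r.init, f.dist'] using this

/-- `p` is the projection of the boundary point `ξ` (a ray from `x₀`) onto the geodesic
segment `[x₀, y]`: the point of `[x₀, y]` lying on the ray toward `ξ` that is farthest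
from `x₀` (the point where the ray `[x₀,ξ]` leaves `[x₀,y]`). -/
def IsProjOn {G : SimpleGraph V} {x₀ : V} (ξ : TreeRay G x₀) (y p : V) : Prop :=
  (G.dist x₀ p + G.dist p y = G.dist x₀ y) ∧ (∃ n, ξ.toFun n = p) ∧
    ∀ q, (G.dist x₀ q + G.dist q y = G.dist x₀ y) → (∃ n, ξ.toFun n = q) →
      G.dist x₀ q ≤ G.dist x₀ p

/-- The local dilatation factor `e^{d(x₀,p) − d(p,y)}`, where `p` is the projection of a
boundary point onto `[x₀, y]` (for `y = γ⁻¹x₀` this is `j_γ(ξ)`). -/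
noncomputable def jVal (G : SimpleGraph V) (x₀ y p : V) : ℝ :=
  Real.exp ((G.dist x₀ p : ℝ) - (G.dist p y : ℝ))

variable {G : SimpleGraph V}

namespace SimpleGraph

theorem IsAcyclic.eq_of_adj_of_dist_add_one_eq (hG : G.IsAcyclic) {y u v w : V}
    (hu : G.Adj u v) (hw : G.Adj w v) (hdu : G.dist y u + 1 = G.dist y v)
    (hdw : G.dist y w + 1 = G.dist y v) : u = w := by
  classical
  have hyv : G.Reachable y v := Reachable.of_dist_ne_zero (by omega)
  obtain ⟨P, hP, -⟩ := hyv.exists_path_of_dist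
  have mem_support {u : V} (hu : G.Adj u v) (hdu : G.dist y u + 1 = G.dist y v) :
      u ∈ P.support := by
    obtain ⟨Q, hQ, hQ_len⟩ := (hyv.trans hu.symm.reachable).exists_path_of_dist
    refine hG.mem_support_of_ne_mem_support_of_adj_of_isPath hP hQ hu.symm fun hv => ?_
    have := dist_le (Q.takeUntil v hv)
    have := Q.length_takeUntil_le_length hv
    omega
  rw [hG.eq_penultimate_of_adj_end hP hu.symm (mem_support hu hdu),
    hG.eq_penultimate_of_adj_end hP hw.symm (mem_support hw hdw)]

end SimpleGraph

theorem GraphAut.dist_invFun_left (f : GraphAut G) (u v : V) :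
    G.dist (f.invFun u) v = G.dist u (f.toFun v) := by
  rw [← f.dist', f.right_inv]

namespace IsProjOn

variable {x y p : V} {ξ : TreeRay G x}

/-- The first step after `p = ξ k` cannot approach `y` by maximality of `p`, and no later step
can, since in a tree the distance to `y` has no local maximum along a geodesic. -/
theorem dist_ray_succ (hT : G.IsTree) (h : IsProjOn ξ y p) {k : ℕ} (hk : ξ.toFun k = p)
    (m : ℕ) : G.dist y (ξ.toFun (k + m + 1)) = G.dist y (ξ.toFun (k + m)) + 1 := by
  induction m with
  | zero =>
    rcases hT.dist_eq_dist_add_one_of_adj y (ξ.adj k) with hdown | hup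
    · subst hk
      obtain ⟨hp_seg, -, hp_max⟩ := h
      have on_segment : G.dist x (ξ.toFun (k + 1)) + G.dist (ξ.toFun (k + 1)) y = G.dist x y := by
        rw [ξ.isGeodesic, ← hp_seg, ξ.isGeodesic, dist_comm, dist_comm (v := y)]
        omega
      have := hp_max _ on_segment ⟨_, rfl⟩
      rw [ξ.isGeodesic, ξ.isGeodesic] at this
      omega
    · exact hup
  | succ m ih =>
    rcases hT.dist_eq_dist_add_one_of_adj y (ξ.adj (k + (m + 1))) with hdown | hup
    · have h_eq := hT.isAcyclic.eq_of_adj_of_dist_add_one_eq (ξ.adj (k + m))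
        (ξ.adj (k + m + 1)).symm ih.symm hdown.symm
      have := congrArg (G.dist x) h_eq
      rw [ξ.isGeodesic, ξ.isGeodesic] at this
      omega
    · exact hup

theorem dist_ray_add (hT : G.IsTree) (h : IsProjOn ξ y p) {n : ℕ} (hn : G.dist x p ≤ n) :
    G.dist y (ξ.toFun n) + G.dist x p = G.dist p y + n := by
  obtain ⟨k, hk⟩ := h.2.1
  have hk_dist : G.dist x p = k := hk ▸ ξ.isGeodesic k
  have along_ray (m : ℕ) : G.dist y (ξ.toFun (k + m)) = G.dist y p + m := by
    induction m with
    | zero => simp [hk]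
    | succ m ih => rw [← Nat.add_assoc, h.dist_ray_succ hT hk, ih, Nat.add_assoc]
  obtain ⟨m, rfl⟩ := Nat.exists_eq_add_of_le (hk_dist ▸ hn)
  rw [along_ray, hk_dist, dist_comm]
  omega

end IsProjOn

theorem j_cocycle_general {V : Type*} (G : SimpleGraph V) (hT : G.IsTree)
    (x₀ : V) (γ δ : GraphAut G) (ξ : TreeRay G x₀) (η : TreeRay G x₀)
    (hη : RayEquiv η (TreeRay.map δ ξ)) (p₁ p₂ p₃ : V)
    (h₁ : IsProjOn ξ (δ.invFun (γ.invFun x₀)) p₁)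
    (h₂ : IsProjOn η (γ.invFun x₀) p₂)
    (h₃ : IsProjOn ξ (δ.invFun x₀) p₃) :
    jVal G x₀ (δ.invFun (γ.invFun x₀)) p₁ =
      jVal G x₀ (γ.invFun x₀) p₂ * jVal G x₀ (δ.invFun x₀) p₃ := by
  obtain ⟨a, b, hη⟩ := hη
  set n := G.dist x₀ p₁ + G.dist x₀ p₂ + G.dist x₀ p₃
  have hδξ : η.toFun (n + a) = δ.toFun (ξ.toFun (n + b)) := hη n
  have F₁ := h₁.dist_ray_add hT (n := n + b) (by omega)
  have F₂ := h₂.dist_ray_add hT (n := n + a) (by omega)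
  have F₃ := h₃.dist_ray_add hT (n := n + b) (by omega)
  rw [GraphAut.dist_invFun_left, ← hδξ] at F₁
  rw [GraphAut.dist_invFun_left, ← hδξ, η.isGeodesic] at F₃
  have key : G.dist x₀ p₁ + G.dist p₂ (γ.invFun x₀) + G.dist p₃ (δ.invFun x₀) =
      G.dist p₁ (δ.invFun (γ.invFun x₀)) + G.dist x₀ p₂ + G.dist x₀ p₃ := by
    omega
  rw [jVal, jVal, jVal, ← Real.exp_add]
  congr 1
  have := congrArg (Nat.cast : ℕ → ℝ) key
  push_cast at this
  linarith

/-- The multiplicative cocycle identity `j_{γδ}(ξ) = j_γ(δξ) · j_δ(ξ)`, where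
`j_γ(ξ) = e^{d(x₀,p) − d(p,γ⁻¹x₀)}` with `p` the projection of `ξ` onto `[x₀,γ⁻¹x₀]`.
Here `η` is the ray from `x₀` representing the boundary point `δξ`, and `p₁, p₂, p₃`
are the projections of `ξ` on `[x₀,(γδ)⁻¹x₀]`, of `δξ` on `[x₀,γ⁻¹x₀]`, and of `ξ` on
`[x₀,δ⁻¹x₀]` respectively. -/
theorem j_cocycle {V : Type*} (G : SimpleGraph V) (hT : G.IsTree) [G.LocallyFinite]
    (x₀ : V) (γ δ : GraphAut G) (ξ : TreeRay G x₀) (η : TreeRay G x₀)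
    (hη : RayEquiv η (TreeRay.map δ ξ)) (p₁ p₂ p₃ : V)
    (h₁ : IsProjOn ξ (δ.invFun (γ.invFun x₀)) p₁)
    (h₂ : IsProjOn η (γ.invFun x₀) p₂)
    (h₃ : IsProjOn ξ (δ.invFun x₀) p₃) :
    jVal G x₀ (δ.invFun (γ.invFun x₀)) p₁ =
      jVal G x₀ (γ.invFun x₀) p₂ * jVal G x₀ (δ.invFun x₀) p₃ :=
  j_cocycle_general G hT x₀ γ δ ξ η hη p₁ p₂ p₃ h₁ h₂ h₃
end

section
/- Let T₁, T₂ be locally finite trees without ends, and let F: ∂T₁ → ∂T₂ be a bijection of their boundaries that preserves the cross-ratio of every four pairwise distinct boundary points. Then there exists a bijective isometry between T₁ and T₂ inducing F on the boundaries. -/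
open SimpleGraph

variable {V : Type*}

/-- A bijective isometry between the graphs `G` and `H` (preserving adjacency and
hence the path metric). -/
structure GraphIsomBet {W : Type*} (G : SimpleGraph V) (H : SimpleGraph W) where
  toFun : V → W
  bij : Function.Bijective toFun
  adj' : ∀ u v, H.Adj (toFun u) (toFun v) ↔ G.Adj u v
  dist' : ∀ u v, H.dist (toFun u) (toFun v) = G.dist u v

/-- The image of a geodesic ray under a bijective isometry of graphs. -/
def GraphIsomBet.mapRay {W : Type*} {G : SimpleGraph V} {H : SimpleGraph W}
    (f : GraphIsomBet G H) {x : V} (r : TreeRay G x) : TreeRay H (f.toFun x) where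
  toFun := f.toFun ∘ r.toFun
  init := by simp [r.init]
  adj := fun n => by simpa [f.adj'] using r.adj n
  isGeodesic := fun n => by
    have := r.isGeodesic n
    simpa [Function.comp, ← r.init, f.dist'] using this

/-!
Write `(ξ|η)` for the overlap of two rays from the base point, so that the cross-ratio is
`exp ((ξ₃|ξ₂) + (ξ₄|ξ₁) - (ξ₃|ξ₁) - (ξ₄|ξ₂))`. Its invariance says that
`D ξ η = (F ξ|F η) - (ξ|η)` satisfies `D a b + D c e = D a e + D c b`, hence
`2 D ξ η = h ξ + h η` for some `h`: this is how overlaps change when the base point moves.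
Taking rays `a ≠ b` with `(a|b) = 0` and `h b ≤ h a`, the ultrametric inequality shows that,
seen from the point at index `h a` of `F a`, the images of `ξ` and `η` overlap in exactly
`(ξ|η)`. Rebasing the rays of `H` at that point turns `F` into an overlap-preserving bijection
`Φ`; as distances between points on rays are determined by their indices and the overlap of the
rays, `r n ↦ Φ r n` is a well-defined isometry.
-/

namespace SimpleGraph

variable {G : SimpleGraph V}

theorem Walk.dist_getVert_of_length_eq_dist {u v : V} {p : G.Walk u v}
    (hp : p.length = G.dist u v) {k : ℕ} (hk : k ≤ p.length) : G.dist u (p.getVert k) = k := by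
  have htake : G.dist u (p.getVert k) ≤ k := by
    simpa [Walk.take_length, hk] using G.dist_le (p.take k)
  have hdrop : G.dist (p.getVert k) v ≤ p.length - k := by
    simpa [Walk.drop_length] using G.dist_le (p.drop k)
  have := (p.take k).reachable.dist_triangle_left v
  omega

theorem IsTree.eq_of_adj_of_dist_add_one_eq (hG : G.IsTree) {x v u₁ u₂ : V}
    (h₁ : G.Adj u₁ v) (h₂ : G.Adj u₂ v) (hd₁ : G.dist x u₁ + 1 = G.dist x v)
    (hd₂ : G.dist x u₂ + 1 = G.dist x v) : u₁ = u₂ := by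
  obtain ⟨p₁, -, hp₁⟩ := hG.connected.exists_path_of_dist x u₁
  obtain ⟨p₂, -, hp₂⟩ := hG.connected.exists_path_of_dist x u₂
  have hq₁ : (p₁.concat h₁).IsPath := Walk.isPath_of_length_eq_dist _ (by simp [hp₁, hd₁])
  have hq₂ : (p₂.concat h₂).IsPath := Walk.isPath_of_length_eq_dist _ (by simp [hp₂, hd₂])
  obtain ⟨p, -, huniq⟩ := hG.existsUnique_path x v
  exact (Walk.concat_inj ((huniq _ hq₁).trans (huniq _ hq₂).symm)).1

theorem IsTree.exists_adj_dist_eq_add_one (hG : G.IsTree) [G.LocallyFinite] (x : V) {v : V}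
    (hv : 2 ≤ G.degree v) : ∃ w, G.Adj v w ∧ G.dist x w = G.dist x v + 1 := by
  classical
  by_contra! hfar
  rw [← G.card_neighborFinset_eq_degree] at hv
  obtain ⟨u₁, hu₁, u₂, hu₂, hne⟩ := Finset.one_lt_card.mp hv
  rw [mem_neighborFinset] at hu₁ hu₂
  have hnear : ∀ u, G.Adj v u → G.dist x u + 1 = G.dist x v := fun u hu =>
    ((hG.dist_eq_dist_add_one_of_adj x hu).resolve_right (hfar u hu)).symm
  exact hne (hG.eq_of_adj_of_dist_add_one_eq hu₁.symm hu₂.symm (hnear u₁ hu₁) (hnear u₂ hu₂))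

end SimpleGraph

theorem RayEquiv.symm {G : SimpleGraph V} {x y : V} {r : TreeRay G x} {s : TreeRay G y}
    (h : RayEquiv r s) : RayEquiv s r :=
  let ⟨a, b, h⟩ := h
  ⟨b, a, fun n => (h n).symm⟩

theorem RayEquiv.trans {G : SimpleGraph V} {x y z : V} {r : TreeRay G x} {s : TreeRay G y}
    {t : TreeRay G z} (h₁ : RayEquiv r s) (h₂ : RayEquiv s t) : RayEquiv r t := by
  obtain ⟨a, b, h₁⟩ := h₁
  obtain ⟨c, e, h₂⟩ := h₂
  refine ⟨a + c, b + e, fun n => ?_⟩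
  calc r.toFun (n + (a + c)) = s.toFun (n + c + b) := by rw [← h₁, Nat.add_right_comm, add_assoc]
    _ = t.toFun (n + (b + e)) := by rw [Nat.add_right_comm, h₂, add_assoc]

def GraphIsomBet.ofDistEq {W : Type*} {G : SimpleGraph V} {H : SimpleGraph W}
    (hG : G.Connected) (f : V → W) (hf : Function.Surjective f)
    (hdist : ∀ u v, H.dist (f u) (f v) = G.dist u v) : GraphIsomBet G H where
  toFun := f
  bij := ⟨fun u v h => hG.dist_eq_zero_iff.mp (by rw [← hdist, h, SimpleGraph.dist_self]), hf⟩
  adj' u v := by rw [← SimpleGraph.dist_eq_one_iff_adj, ← SimpleGraph.dist_eq_one_iff_adj, hdist]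
  dist' := hdist

section Cocycle

variable {Ω : Type*} {D : Ω → Ω → ℤ}

theorem add_sub_eq_of_cocycle (hsymm : ∀ a b, D a b = D b a)
    (hcoc : ∀ a b c e, a ≠ b → a ≠ c → a ≠ e → b ≠ c → b ≠ e → c ≠ e →
      D a b + D c e = D a e + D c b)
    {a s t s' t' : Ω} (hs : s ≠ a) (ht : t ≠ a) (hs' : s' ≠ a) (ht' : t' ≠ a) (hst : s ≠ t)
    (hst' : s' ≠ t') : D a s + D a t - D s t = D a s' + D a t' - D s' t' := by
  have hright : ∀ {s t t'}, s ≠ a → t ≠ a → t' ≠ a → s ≠ t → s ≠ t' →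
      D a s + D a t - D s t = D a s + D a t' - D s t' := by
    intro s t t' hs ht ht' hst hst'
    rcases eq_or_ne t t' with rfl | htt'
    · rfl
    have := hcoc a t s t' (Ne.symm ht) (Ne.symm hs) (Ne.symm ht') (Ne.symm hst) htt' hst'
    omega
  have hswap : ∀ s t, D a s + D a t - D s t = D a t + D a s - D t s := fun s t => by
    rw [hsymm s t]
    ring
  rcases eq_or_ne s t' with rfl | hst''
  · rw [hright hs ht hs' hst (Ne.symm hst'), hswap]
  · rw [hright hs ht ht' hst hst'', hswap, hright ht' hs hs' (Ne.symm hst'') (Ne.symm hst'),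
      hswap]

theorem exists_two_mul_eq_add_of_cocycle (hsymm : ∀ a b, D a b = D b a)
    (hcoc : ∀ a b c e, a ≠ b → a ≠ c → a ≠ e → b ≠ c → b ≠ e → c ≠ e →
      D a b + D c e = D a e + D c b) :
    ∃ h : Ω → ℤ, ∀ a b, a ≠ b → 2 * D a b = h a + h b := by
  classical
  by_cases hthree : ∃ p q r : Ω, p ≠ q ∧ p ≠ r ∧ q ≠ r
  · obtain ⟨p, q, r, hpq, hpr, hqr⟩ := hthree
    let s : Ω → Ω := fun a => if a = p then q else p
    let t : Ω → Ω := fun a => if a = r then q else r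
    refine ⟨fun a => D a (s a) + D a (t a) - D (s a) (t a), fun a b hab => ?_⟩
    obtain ⟨c, hca, hcb⟩ : ∃ c, c ≠ a ∧ c ≠ b := by
      by_cases hp : p ≠ a ∧ p ≠ b
      · exact ⟨p, hp⟩
      by_cases hq : q ≠ a ∧ q ≠ b
      · exact ⟨q, hq⟩
      exact ⟨r, by grind⟩
    beta_reduce
    rw [add_sub_eq_of_cocycle hsymm hcoc (s := s a) (t := t a) (s' := b) (t' := c) (by grind)
        (by grind) (Ne.symm hab) hca (by grind) (Ne.symm hcb),
      add_sub_eq_of_cocycle hsymm hcoc (s := s b) (t := t b) (s' := a) (t' := c) (by grind)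
        (by grind) hab hcb (by grind) (Ne.symm hca), hsymm b a]
    ring
  · push Not at hthree
    have hpartner : ∀ a b : Ω, a ≠ b → ∀ c, c ≠ a → c = b := fun a b hab c hca =>
      (hthree a b c hab (Ne.symm hca)).symm
    refine ⟨fun a => if h : ∃ b, b ≠ a then D a h.choose else 0, fun a b hab => ?_⟩
    have ha : ∃ c, c ≠ a := ⟨b, Ne.symm hab⟩
    have hb : ∃ c, c ≠ b := ⟨a, hab⟩
    simp only [dif_pos ha, dif_pos hb]
    rw [hpartner a b hab _ ha.choose_spec, hpartner b a (Ne.symm hab) _ hb.choose_spec, hsymm b a]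
    ring

end Cocycle

namespace TreeRay

variable {W : Type*} {G : SimpleGraph V} {H : SimpleGraph W} {x : V} {y : W}

theorem ext {r s : TreeRay G x} (h : r.toFun = s.toFun) : r = s := by
  cases r
  cases s
  cases h
  rfl

theorem index_eq_of_apply_eq {r s : TreeRay G x} {i j : ℕ} (h : r.toFun i = s.toFun j) :
    i = j := by
  rw [← r.isGeodesic i, ← s.isGeodesic j, h]

theorem reachable (r : TreeRay G x) (n : ℕ) : G.Reachable x (r.toFun n) := by
  induction n with
  | zero => rw [r.init]
  | succ n ih => exact ih.trans (r.adj n).reachable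

theorem dist_apply_add (r : TreeRay G x) (m k : ℕ) :
    G.dist (r.toFun m) (r.toFun (m + k)) = k := by
  have hle : G.dist (r.toFun m) (r.toFun (m + k)) ≤ k := by
    induction k with
    | zero => simp
    | succ k ih =>
      have := (r.adj (m + k)).reachable.dist_triangle_right (r.toFun m)
      rw [SimpleGraph.dist_eq_one_iff_adj.mpr (r.adj _)] at this
      rw [← add_assoc]
      omega
  have := (r.reachable m).dist_triangle_left (r.toFun (m + k))
  rw [r.isGeodesic, r.isGeodesic] at this
  omega

theorem dist_apply_apply (r : TreeRay G x) (m n : ℕ) :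
    G.dist (r.toFun m) (r.toFun n) + 2 * min m n = m + n := by
  rcases le_total m n with h | h
  · obtain ⟨k, rfl⟩ := Nat.exists_eq_add_of_le h
    rw [dist_apply_add]
    omega
  · obtain ⟨k, rfl⟩ := Nat.exists_eq_add_of_le h
    rw [SimpleGraph.dist_comm, dist_apply_add]
    omega

theorem apply_eq_of_apply_eq_of_le (hG : G.IsTree) {r s : TreeRay G x} {m n : ℕ} (hmn : m ≤ n)
    (h : r.toFun n = s.toFun n) : r.toFun m = s.toFun m := by
  induction n with
  | zero => rwa [Nat.le_zero.mp hmn]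
  | succ n ih =>
    rcases hmn.eq_or_lt with rfl | hlt
    · exact h
    refine ih (by omega)
      (hG.eq_of_adj_of_dist_add_one_eq (x := x) (r.adj n) (h ▸ s.adj n) ?_ ?_) <;>
      simp [isGeodesic]

theorem rayOverlap_comm (r s : TreeRay G x) : rayOverlap r s = rayOverlap s r := by
  unfold rayOverlap
  simp only [eq_comm]

theorem apply_eq_iff_le_rayOverlap (hG : G.IsTree) {r s : TreeRay G x} (hrs : r ≠ s) (n : ℕ) :
    r.toFun n = s.toFun n ↔ n ≤ rayOverlap r s := by
  have hbdd : BddAbove {n | r.toFun n = s.toFun n} := by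
    obtain ⟨N, hN⟩ : ∃ N, r.toFun N ≠ s.toFun N := by
      by_contra! h
      exact hrs (ext (funext h))
    exact ⟨N, fun n hn => by
      by_contra! hlt
      exact hN (apply_eq_of_apply_eq_of_le hG hlt.le hn)⟩
  have hmem : r.toFun (rayOverlap r s) = s.toFun (rayOverlap r s) :=
    Nat.sSup_mem ⟨0, by simp [r.init, s.init]⟩ hbdd
  exact ⟨fun hn => le_csSup hbdd hn, fun hn => apply_eq_of_apply_eq_of_le hG hn hmem⟩

theorem apply_rayOverlap_add_one_ne (hG : G.IsTree) {r s : TreeRay G x} (hrs : r ≠ s) :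
    r.toFun (rayOverlap r s + 1) ≠ s.toFun (rayOverlap r s + 1) := fun h => by
  have := (apply_eq_iff_le_rayOverlap hG hrs _).mp h
  omega

theorem rayOverlap_eq_of_apply_eq_of_apply_ne (hG : G.IsTree) {r s : TreeRay G x} {N : ℕ}
    (h : r.toFun N = s.toFun N) (hne : r.toFun (N + 1) ≠ s.toFun (N + 1)) :
    rayOverlap r s = N := by
  have hrs : r ≠ s := by
    rintro rfl
    exact hne rfl
  have := (apply_eq_iff_le_rayOverlap hG hrs N).mp h
  have := mt (apply_eq_iff_le_rayOverlap hG hrs (N + 1)).mpr hne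
  omega

theorem min_rayOverlap_le (hG : G.IsTree) {a b c : TreeRay G x} (hab : a ≠ b) (hbc : b ≠ c)
    (hac : a ≠ c) : min (rayOverlap a b) (rayOverlap b c) ≤ rayOverlap a c := by
  rw [← apply_eq_iff_le_rayOverlap hG hac]
  exact ((apply_eq_iff_le_rayOverlap hG hab _).mpr (min_le_left _ _)).trans
    ((apply_eq_iff_le_rayOverlap hG hbc _).mpr (min_le_right _ _))

theorem dist_apply_apply_rayOverlap_add (hG : G.IsTree) {r s : TreeRay G x} (hrs : r ≠ s)
    {m : ℕ} (hm : rayOverlap r s ≤ m) (j : ℕ) :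
    G.dist (r.toFun m) (s.toFun (rayOverlap r s + j)) = m - rayOverlap r s + j := by
  set k := rayOverlap r s
  have hk : r.toFun k = s.toFun k := (apply_eq_iff_le_rayOverlap hG hrs k).mpr le_rfl
  induction j using Nat.strong_induction_on with
  | _ j ih =>
  rcases j with _ | j
  · rw [add_zero, add_zero, ← hk, SimpleGraph.dist_comm, show m = k + (m - k) by omega,
      dist_apply_add]
    omega
  have hj := ih j (by omega)
  rw [← add_assoc]
  rcases hG.dist_eq_dist_add_one_of_adj (r.toFun m) (s.adj (k + j)) with hdec | hinc
  · -- A decrease would make `s (k + j + 1)` a neighbour of `s (k + j)` closer to `r m`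
    -- besides `s (k + j - 1)` (besides `r (k + 1)` if `j = 0`).
    exfalso
    rcases j with _ | j
    · rw [add_zero] at hj hdec
      have hr : G.dist (r.toFun m) (r.toFun (k + 1)) + 1 = G.dist (r.toFun m) (s.toFun k) := by
        have := r.dist_apply_apply m (k + 1)
        omega
      exact apply_rayOverlap_add_one_ne hG hrs (hG.eq_of_adj_of_dist_add_one_eq
        (hk ▸ (r.adj k).symm) (s.adj k).symm hr hdec.symm)
    · have hj' := ih j (by omega)
      rw [← add_assoc] at hj hdec
      have := hG.eq_of_adj_of_dist_add_one_eq (s.adj (k + j + 1)).symm (s.adj (k + j))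
        hdec.symm (by omega)
      have := index_eq_of_apply_eq this
      omega
  · rw [hinc, hj]
    omega

theorem dist_apply_apply_of_ne (hG : G.IsTree) {r s : TreeRay G x} (hrs : r ≠ s) (m n : ℕ) :
    G.dist (r.toFun m) (s.toFun n) + 2 * min (rayOverlap r s) (min m n) = m + n := by
  rcases le_total n (rayOverlap r s) with hn | hn
  · rw [← (apply_eq_iff_le_rayOverlap hG hrs n).mpr hn]
    have := r.dist_apply_apply m n
    omega
  rcases le_total m (rayOverlap r s) with hm | hm
  · rw [(apply_eq_iff_le_rayOverlap hG hrs m).mpr hm]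
    have := s.dist_apply_apply m n
    omega
  obtain ⟨j, rfl⟩ := Nat.exists_eq_add_of_le hn
  rw [dist_apply_apply_rayOverlap_add hG hrs hm j]
  omega

theorem eq_of_rayEquiv (hG : G.IsTree) {r s : TreeRay G x} (h : RayEquiv r s) : r = s := by
  obtain ⟨a, b, hab⟩ := h
  obtain rfl : a = b := by simpa using index_eq_of_apply_eq (hab 0)
  exact ext (funext fun m => apply_eq_of_apply_eq_of_le hG (Nat.le_add_right m a) (hab m))

theorem two_mul_rayOverlap_add_of_shift (hG : G.IsTree) {x' : V} {r s : TreeRay G x}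
    {r' s' : TreeRay G x'} (hrs : r ≠ s) {a b a' b' : ℕ}
    (hr : ∀ n, r'.toFun (n + a) = r.toFun (n + b))
    (hs : ∀ n, s'.toFun (n + a') = s.toFun (n + b')) :
    2 * rayOverlap r' s' + b + b' = 2 * rayOverlap r s + a + a' := by
  have hrs' : r' ≠ s' := by
    rintro rfl
    have hr : RayEquiv r' r := ⟨a, b, hr⟩
    exact hrs (eq_of_rayEquiv hG (hr.symm.trans ⟨a', b', hs⟩))
  set N := rayOverlap r s + rayOverlap r' s'
  have h' := dist_apply_apply_of_ne hG hrs' (N + a) (N + a')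
  have h := dist_apply_apply_of_ne hG hrs (N + b) (N + b')
  rw [hr, hs] at h'
  omega

theorem exists_apply_dist_eq (hG : G.IsTree) [G.LocallyFinite] (hGe : NoEnds G) (x v : V) :
    ∃ r : TreeRay G x, r.toFun (G.dist x v) = v := by
  obtain ⟨p, -, hp⟩ := hG.connected.exists_path_of_dist x v
  choose next hnext using fun w => hG.exists_adj_dist_eq_add_one x (hGe w)
  have hnext_dist : ∀ j, G.dist x (next^[j] v) = p.length + j := by
    intro j
    induction j with
    | zero => exact hp.symm
    | succ j ih => rw [Function.iterate_succ_apply', (hnext _).2, ih, add_assoc]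
  let e : ℕ → V := fun k => if k ≤ p.length then p.getVert k else next^[k - p.length] v
  have he_dist : ∀ k, G.dist x (e k) = k := by
    intro k
    by_cases hk : k ≤ p.length
    · simp only [e, if_pos hk]
      exact Walk.dist_getVert_of_length_eq_dist hp hk
    · simp only [e, if_neg hk, hnext_dist]
      omega
  have he_adj : ∀ k, G.Adj (e k) (e (k + 1)) := by
    intro k
    rcases lt_trichotomy (k + 1) (p.length + 1) with hk | hk | hk
    · simp only [e, if_pos (show k ≤ p.length by omega),
        if_pos (show k + 1 ≤ p.length by omega)]
      exact p.adj_getVert_succ (by omega)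
    · obtain rfl : k = p.length := by omega
      simp only [e, le_refl, if_true, Nat.not_succ_le_self, if_false, Walk.getVert_length,
        Nat.add_sub_cancel_left, Function.iterate_one]
      exact (hnext v).1
    · simp only [e, if_neg (show ¬k ≤ p.length by omega),
        if_neg (show ¬k + 1 ≤ p.length by omega),
        show k + 1 - p.length = k - p.length + 1 by omega, Function.iterate_succ_apply']
      exact (hnext _).1
  refine ⟨⟨e, by simp [e, Walk.getVert_zero], he_adj, fun k => he_dist k⟩, ?_⟩
  show e _ = v
  simp [e, ← hp, Walk.getVert_length]

theorem exists_rayOverlap_eq_zero (hG : G.IsTree) [G.LocallyFinite] (hGe : NoEnds G)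
    (a : TreeRay G x) : ∃ b : TreeRay G x, a ≠ b ∧ rayOverlap a b = 0 := by
  classical
  have hdeg := hGe x
  rw [← G.card_neighborFinset_eq_degree] at hdeg
  obtain ⟨z, hz, hza⟩ := Finset.exists_mem_ne hdeg (a.toFun 1)
  rw [SimpleGraph.mem_neighborFinset, ← SimpleGraph.dist_eq_one_iff_adj] at hz
  obtain ⟨b, hb⟩ := exists_apply_dist_eq hG hGe x z
  rw [hz] at hb
  have hne : a.toFun (0 + 1) ≠ b.toFun (0 + 1) := hb ▸ Ne.symm hza
  have h₀ := rayOverlap_eq_of_apply_eq_of_apply_ne hG (by rw [a.init, b.init]) hne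
  exact ⟨b, fun h => hne (h ▸ rfl), h₀⟩

open Classical in
/-- The index at which `s` leaves `η`, capped at `d`. The case `s = η` is separate because
`rayOverlap η η` is the junk value `0`. -/
noncomputable def branchIndex (η : TreeRay G x) (d : ℕ) (s : TreeRay G x) : ℕ :=
  if s = η then d else min (rayOverlap η s) d

theorem branchIndex_self (η : TreeRay G x) (d : ℕ) : branchIndex η d η = d := by
  simp [branchIndex]

theorem branchIndex_of_ne (η : TreeRay G x) (d : ℕ) {s : TreeRay G x} (hs : s ≠ η) :
    branchIndex η d s = min (rayOverlap η s) d := by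
  simp [branchIndex, hs]

theorem branchIndex_le (η : TreeRay G x) (d : ℕ) (s : TreeRay G x) : branchIndex η d s ≤ d := by
  unfold branchIndex
  split_ifs <;> omega

theorem apply_eq_of_le_branchIndex (hG : G.IsTree) (η : TreeRay G x) (d : ℕ) (s : TreeRay G x)
    {i : ℕ} (hi : i ≤ branchIndex η d s) : s.toFun i = η.toFun i := by
  by_cases hs : s = η
  · rw [hs]
  · rw [branchIndex_of_ne η d hs] at hi
    exact ((apply_eq_iff_le_rayOverlap hG (Ne.symm hs) i).mpr (by omega)).symm

theorem dist_apply_apply_branchIndex (hG : G.IsTree) (η : TreeRay G x) (d : ℕ)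
    (s : TreeRay G x) {j : ℕ} (hj : branchIndex η d s ≤ j) :
    G.dist (η.toFun d) (s.toFun j) + 2 * branchIndex η d s = d + j := by
  by_cases hs : s = η
  · subst hs
    rw [branchIndex_self] at hj ⊢
    have := s.dist_apply_apply d j
    omega
  · have := dist_apply_apply_of_ne hG (Ne.symm hs) d j
    rw [branchIndex_of_ne η d hs] at hj ⊢
    omega

noncomputable def rebase (hG : G.IsTree) (η : TreeRay G x) (d : ℕ) (s : TreeRay G x) :
    TreeRay G (η.toFun d) where
  toFun m :=
    if m < d - branchIndex η d s then η.toFun (d - m)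
    else s.toFun (m + branchIndex η d s - (d - branchIndex η d s))
  init := by
    have hle := branchIndex_le η d s
    split_ifs with h
    · rfl
    · rw [apply_eq_of_le_branchIndex hG η d s (by omega)]
      congr 1
      omega
  adj m := by
    have hle := branchIndex_le η d s
    split_ifs with h₁ h₂ h₂
    · rw [show d - m = d - (m + 1) + 1 by omega]
      exact (η.adj _).symm
    · rw [show d - m = branchIndex η d s + 1 by omega, show m + 1 + branchIndex η d s -
        (d - branchIndex η d s) = branchIndex η d s by omega,
        apply_eq_of_le_branchIndex hG η d s le_rfl]
      exact (η.adj _).symm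
    · omega
    · rw [show m + 1 + branchIndex η d s - (d - branchIndex η d s) =
        m + branchIndex η d s - (d - branchIndex η d s) + 1 by omega]
      exact s.adj _
  isGeodesic m := by
    have hle := branchIndex_le η d s
    split_ifs with h
    · have := η.dist_apply_apply d (d - m)
      omega
    · have := dist_apply_apply_branchIndex hG η d s
        (j := m + branchIndex η d s - (d - branchIndex η d s)) (by omega)
      omega

theorem rebase_apply_add (hG : G.IsTree) (η : TreeRay G x) (d : ℕ) (s : TreeRay G x)
    (n : ℕ) :
    (rebase hG η d s).toFun (n + (d - branchIndex η d s)) = s.toFun (n + branchIndex η d s) := by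
  have hle := branchIndex_le η d s
  simp only [rebase,
    if_neg (show ¬n + (d - branchIndex η d s) < d - branchIndex η d s by omega)]
  congr 1
  omega

theorem rayEquiv_rebase (hG : G.IsTree) (η : TreeRay G x) (d : ℕ) (s : TreeRay G x) :
    RayEquiv (rebase hG η d s) s :=
  ⟨_, _, rebase_apply_add hG η d s⟩

theorem rayOverlap_rebase (hG : G.IsTree) (η : TreeRay G x) (d : ℕ) {s s' : TreeRay G x}
    (hss' : s ≠ s') :
    rayOverlap (rebase hG η d s) (rebase hG η d s') + branchIndex η d s + branchIndex η d s' =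
      rayOverlap s s' + d := by
  have := two_mul_rayOverlap_add_of_shift hG hss' (rebase_apply_add hG η d s)
    (rebase_apply_add hG η d s')
  have := branchIndex_le η d s
  have := branchIndex_le η d s'
  omega

theorem exists_rayEquiv (hG : G.IsTree) [G.LocallyFinite] (hGe : NoEnds G) {w : V}
    (ρ : TreeRay G w) (z : V) : ∃ σ : TreeRay G z, RayEquiv σ ρ := by
  obtain ⟨τ, hτ⟩ := exists_apply_dist_eq hG hGe w z
  generalize G.dist w z = n at hτ
  subst hτ
  exact ⟨rebase hG τ n ρ, rayEquiv_rebase hG τ n ρ⟩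

theorem rebase_bijective (hG : G.IsTree) [G.LocallyFinite] (hGe : NoEnds G)
    (η : TreeRay G x) (d : ℕ) : Function.Bijective (rebase hG η d) := by
  refine ⟨fun s s' h => eq_of_rayEquiv hG ((rayEquiv_rebase hG η d s).symm.trans ?_),
    fun ρ => ?_⟩
  · rw [h]
    exact rayEquiv_rebase hG η d s'
  · obtain ⟨σ, hσ⟩ := exists_rayEquiv hG hGe ρ x
    exact ⟨σ, eq_of_rayEquiv hG ((rayEquiv_rebase hG η d σ).trans hσ)⟩

theorem dist_apply_eq_of_rayOverlap_eq (hG : G.IsTree) (hH : H.IsTree)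
    {Φ : TreeRay G x → TreeRay H y} (hΦ : Function.Injective Φ)
    (hov : ∀ r s, r ≠ s → rayOverlap (Φ r) (Φ s) = rayOverlap r s)
    (r s : TreeRay G x) (m n : ℕ) :
    H.dist ((Φ r).toFun m) ((Φ s).toFun n) = G.dist (r.toFun m) (s.toFun n) := by
  by_cases hrs : r = s
  · subst hrs
    have := (Φ r).dist_apply_apply m n
    have := r.dist_apply_apply m n
    omega
  · have h₁ := dist_apply_apply_of_ne hH (hΦ.ne hrs) m n
    have h₂ := dist_apply_apply_of_ne hG hrs m n
    rw [hov r s hrs] at h₁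
    omega

theorem exists_graphIsomBet_of_rayOverlap_eq (hG : G.IsTree) (hH : H.IsTree)
    [G.LocallyFinite] [H.LocallyFinite] (hGe : NoEnds G) (hHe : NoEnds H)
    {Φ : TreeRay G x → TreeRay H y} (hΦ : Function.Bijective Φ)
    (hov : ∀ r s, r ≠ s → rayOverlap (Φ r) (Φ s) = rayOverlap r s) :
    ∃ f : GraphIsomBet G H, ∀ r n, f.toFun (r.toFun n) = (Φ r).toFun n := by
  choose ray hray using exists_apply_dist_eq hG hGe x
  have hdist := dist_apply_eq_of_rayOverlap_eq hG hH hΦ.1 hov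
  let f : V → W := fun v => (Φ (ray v)).toFun (G.dist x v)
  have hf : ∀ r n, f (r.toFun n) = (Φ r).toFun n := by
    intro r n
    have h := hdist (ray (r.toFun n)) r (G.dist x (r.toFun n)) n
    rw [hray, SimpleGraph.dist_self] at h
    exact hH.connected.dist_eq_zero_iff.mp h
  have hsurj : Function.Surjective f := fun w => by
    obtain ⟨ρ, hρ⟩ := exists_apply_dist_eq hH hHe y w
    obtain ⟨ξ, rfl⟩ := hΦ.2 ρ
    exact ⟨ξ.toFun _, (hf ξ _).trans hρ⟩
  refine ⟨GraphIsomBet.ofDistEq hG.connected f hsurj fun u v => ?_, hf⟩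
  rw [hdist, hray, hray]

theorem crossRatio_eq_exp {ξ₁ ξ₂ ξ₃ ξ₄ : TreeRay G x} (h₁₃ : ξ₁ ≠ ξ₃) (h₁₄ : ξ₁ ≠ ξ₄)
    (h₂₃ : ξ₂ ≠ ξ₃) (h₂₄ : ξ₂ ≠ ξ₄) :
    crossRatio ξ₁ ξ₂ ξ₃ ξ₄ = Real.exp (rayOverlap ξ₃ ξ₂ + rayOverlap ξ₄ ξ₁ -
      rayOverlap ξ₃ ξ₁ - rayOverlap ξ₄ ξ₂) := by
  simp only [crossRatio, rho]
  rw [if_neg h₁₃.symm, if_neg h₁₄.symm, if_neg h₂₃.symm, if_neg h₂₄.symm, ← Real.exp_add,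
    ← Real.exp_add, ← Real.exp_sub]
  congr 1
  ring

theorem exists_two_mul_rayOverlap_eq_of_crossRatio_eq {F : TreeRay G x → TreeRay H y}
    (hF : Function.Injective F)
    (hcr : ∀ ξ₁ ξ₂ ξ₃ ξ₄ : TreeRay G x,
      ξ₁ ≠ ξ₂ → ξ₁ ≠ ξ₃ → ξ₁ ≠ ξ₄ → ξ₂ ≠ ξ₃ → ξ₂ ≠ ξ₄ → ξ₃ ≠ ξ₄ →
      crossRatio (F ξ₁) (F ξ₂) (F ξ₃) (F ξ₄) = crossRatio ξ₁ ξ₂ ξ₃ ξ₄) :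
    ∃ h : TreeRay G x → ℤ, ∀ ξ ξ', ξ ≠ ξ' →
      2 * (rayOverlap (F ξ) (F ξ') : ℤ) = 2 * rayOverlap ξ ξ' + h ξ + h ξ' := by
  obtain ⟨h, hh⟩ := exists_two_mul_eq_add_of_cocycle
    (D := fun ξ ξ' => (rayOverlap (F ξ) (F ξ') : ℤ) - rayOverlap ξ ξ')
    (fun ξ ξ' => by simp only [rayOverlap_comm (F ξ), rayOverlap_comm ξ])
    (fun a b c e hab hac hae hbc hbe hce => by
      have hexp := hcr e b a c (Ne.symm hbe) (Ne.symm hae) (Ne.symm hce) (Ne.symm hab) hbc hac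
      rw [crossRatio_eq_exp (hF.ne (Ne.symm hae)) (hF.ne (Ne.symm hce)) (hF.ne (Ne.symm hab))
        (hF.ne hbc), crossRatio_eq_exp (Ne.symm hae) (Ne.symm hce) (Ne.symm hab) hbc] at hexp
      have := Real.exp_injective hexp
      rw [← Int.cast_inj (α := ℝ)]
      push_cast
      linarith)
  exact ⟨h, fun ξ ξ' hne => by linarith [hh ξ ξ' hne]⟩

theorem two_mul_branchIndex_eq (hG : G.IsTree) (hH : H.IsTree) {F : TreeRay G x → TreeRay H y}
    (hF : Function.Injective F) {h : TreeRay G x → ℤ}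
    (hP : ∀ ξ ξ', ξ ≠ ξ' →
      2 * (rayOverlap (F ξ) (F ξ') : ℤ) = 2 * rayOverlap ξ ξ' + h ξ + h ξ')
    {a b : TreeRay G x} (hab : a ≠ b) (hab₀ : rayOverlap a b = 0) (hba : h b ≤ h a)
    (ξ : TreeRay G x) : 2 * (branchIndex (F a) (h a).toNat (F ξ) : ℤ) = h a + h ξ := by
  have hPab := hP a b hab
  by_cases hξa : ξ = a
  · subst hξa
    rw [branchIndex_self]
    omega
  rw [branchIndex_of_ne _ _ (hF.ne hξa)]
  have hPaξ := hP a ξ (Ne.symm hξa)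
  by_cases hξb : ξ = b
  · subst hξb
    omega
  -- The ultrametric inequalities for `a, b, ξ` and for their images force `h ξ ≤ h a`,
  -- with `(a|ξ) = 0` unless `h ξ = h a`.
  have := min_rayOverlap_le hG (Ne.symm hξa) hξb hab
  have := min_rayOverlap_le hH (hF.ne hab) (hF.ne (Ne.symm hξb)) (hF.ne (Ne.symm hξa))
  have := min_rayOverlap_le hH (hF.ne hab.symm) (hF.ne (Ne.symm hξa)) (hF.ne (Ne.symm hξb))
  have := min_rayOverlap_le hH (hF.ne (Ne.symm hξa)) (hF.ne hξb) (hF.ne hab)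
  have hPbξ := hP b ξ (Ne.symm hξb)
  simp only [rayOverlap_comm ξ b, rayOverlap_comm (F ξ) (F b), rayOverlap_comm (F b) (F a)] at *
  omega

end TreeRay

open TreeRay

/-- Let `T₁, T₂` be locally finite trees without ends and `F : ∂T₁ → ∂T₂` a bijection of
their boundaries preserving the cross-ratio of every four pairwise distinct boundary
points. Then there is a bijective isometry `T₁ → T₂` inducing `F` on the boundaries. -/
theorem crossRatio_bijection_extends_to_isometry {V W : Type*}
    (G : SimpleGraph V) (H : SimpleGraph W) (hG : G.IsTree) (hH : H.IsTree)
    [G.LocallyFinite] [H.LocallyFinite] (hGe : NoEnds G) (hHe : NoEnds H)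
    (x₀ : V) (y₀ : W) (F : TreeRay G x₀ → TreeRay H y₀) (hbij : Function.Bijective F)
    (hcr : ∀ ξ₁ ξ₂ ξ₃ ξ₄ : TreeRay G x₀,
      ξ₁ ≠ ξ₂ → ξ₁ ≠ ξ₃ → ξ₁ ≠ ξ₄ → ξ₂ ≠ ξ₃ → ξ₂ ≠ ξ₄ → ξ₃ ≠ ξ₄ →
      crossRatio (F ξ₁) (F ξ₂) (F ξ₃) (F ξ₄) = crossRatio ξ₁ ξ₂ ξ₃ ξ₄) :
    ∃ f : GraphIsomBet G H, ∀ ξ : TreeRay G x₀, RayEquiv (f.mapRay ξ) (F ξ) := by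
  obtain ⟨h, hP⟩ := exists_two_mul_rayOverlap_eq_of_crossRatio_eq hbij.1 hcr
  obtain ⟨a, b, hab, hab₀, hba⟩ :
      ∃ a b : TreeRay G x₀, a ≠ b ∧ rayOverlap a b = 0 ∧ h b ≤ h a := by
    obtain ⟨a, -⟩ := exists_apply_dist_eq hG hGe x₀ x₀
    obtain ⟨b, hab, hab₀⟩ := exists_rayOverlap_eq_zero hG hGe a
    rcases le_total (h b) (h a) with hba | hab'
    · exact ⟨a, b, hab, hab₀, hba⟩
    · exact ⟨b, a, Ne.symm hab, by rwa [rayOverlap_comm], hab'⟩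
  have hov : ∀ ξ ξ', ξ ≠ ξ' → rayOverlap (rebase hH (F a) (h a).toNat (F ξ))
      (rebase hH (F a) (h a).toNat (F ξ')) = rayOverlap ξ ξ' := by
    intro ξ ξ' hne
    have hrebase := rayOverlap_rebase hH (F a) (h a).toNat (hbij.1.ne hne)
    have hξ := two_mul_branchIndex_eq hG hH hbij.1 hP hab hab₀ hba ξ
    have hξ' := two_mul_branchIndex_eq hG hH hbij.1 hP hab hab₀ hba ξ'
    have ha := two_mul_branchIndex_eq hG hH hbij.1 hP hab hab₀ hba a
    have hFξξ' := hP ξ ξ' hne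
    omega
  obtain ⟨f, hf⟩ := exists_graphIsomBet_of_rayOverlap_eq hG hH hGe hHe
    ((rebase_bijective hH hHe (F a) (h a).toNat).comp hbij) hov
  exact ⟨f, fun ξ => ⟨_, _, fun n =>
    (hf ξ _).trans (rebase_apply_add hH (F a) (h a).toNat (F ξ) n)⟩⟩
end

section
/- Let T be a locally finite tree, Γ a group acting on T by isometries without inversion such that every non-identity element of Γ is hyperbolic (fixes no vertex). Then Γ is a free group. -/
/-!
Consider the groupoid whose objects are the `Γ`-orbits of vertices and whose morphisms `a ⟶ b` are
the `Γ`-orbits of pairs of vertices `(u, w) ∈ a × b`. It is connected, and since the action is free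
its vertex groups are copies of `Γ`. Because no edge is inverted, the edges admit a `Γ`-invariant
orientation, and the groupoid is free on the orbits of positively oriented edges: a labelling of
these orbits extends to a `Γ`-invariant labelling `y` of oriented edges, which integrates along the
tree to a map `D` with `D w = y(u, w) * D u`, and `(u, w) ↦ D w * (D u)⁻¹` is the required functor;
it is unique because the morphisms telescope along walks. By the Nielsen–Schreier machinery, a
vertex group of a connected free groupoid is free.
-/

open CategoryTheory Function MulAction

namespace MulAction

variable {Γ V : Type*} [Group Γ] [MulAction Γ V]

theorem exists_smul_out_eq (v : V) : ∃ γ : Γ, γ • (⟦v⟧ : orbitRel.Quotient Γ V).out = v :=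
  mem_orbit_iff.mp (Quotient.exact (Quotient.out_eq (⟦v⟧ : orbitRel.Quotient Γ V)).symm)

variable (Γ) in
noncomputable def orbitShift (v : V) : Γ :=
  (exists_smul_out_eq v).choose

theorem orbitShift_smul_out (v : V) :
    orbitShift Γ v • (⟦v⟧ : orbitRel.Quotient Γ V).out = v :=
  (exists_smul_out_eq v).choose_spec

theorem orbitShift_smul (hfree : ∀ v : V, Injective fun γ : Γ => γ • v) (γ : Γ) (v : V) :
    orbitShift Γ (γ • v) = γ * orbitShift Γ v := by
  apply hfree (⟦v⟧ : orbitRel.Quotient Γ V).out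
  have h := orbitShift_smul_out (Γ := Γ) (γ • v)
  rw [orbitRel.Quotient.quotient_smul_eq] at h
  simp only [h, mul_smul, orbitShift_smul_out]

theorem orbitShift_out (hfree : ∀ v : V, Injective fun γ : Γ => γ • v)
    (x : orbitRel.Quotient Γ V) : orbitShift Γ x.out = 1 := by
  apply hfree x.out
  have h := orbitShift_smul_out (Γ := Γ) x.out
  rw [Quotient.out_eq] at h
  simp only [h, one_smul]

theorem orbitRel.Quotient.quotient_smul_pair_eq (γ : Γ) (u w : V) :
    (⟦(γ • u, γ • w)⟧ : orbitRel.Quotient Γ (V × V)) = ⟦(u, w)⟧ :=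
  orbitRel.Quotient.quotient_smul_eq (a := (u, w))

end MulAction

namespace SimpleGraph

variable {V : Type*} {G : SimpleGraph V} {X : Type*} [Group X]

theorem Preconnected.eq_of_eq_mul_of_adj (hG : G.Preconnected) {y : V → V → X} {D D' : V → X}
    (hD : ∀ u w, G.Adj u w → D w = y u w * D u) (hD' : ∀ u w, G.Adj u w → D' w = y u w * D' u)
    {r : V} (hr : D r = D' r) : D = D' := by
  funext v
  obtain ⟨p⟩ := hG r v
  induction p with
  | nil => exact hr
  | cons h _ ih => exact ih (by rw [hD _ _ h, hD' _ _ h, hr])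

theorem Preconnected.mul_inv_map_eq (hG : G.Preconnected) {y : V → V → X} {D : V → X}
    (hD : ∀ u w, G.Adj u w → D w = y u w * D u) (φ : G →g G)
    (hy : ∀ u w, G.Adj u w → y (φ u) (φ w) = y u w) (u v : V) :
    D (φ v) * (D (φ u))⁻¹ = D v * (D u)⁻¹ := by
  have h : (fun v => D (φ v)) = fun v => D v * (D u)⁻¹ * D (φ u) :=
    hG.eq_of_eq_mul_of_adj (r := u)
      (fun a b h => by rw [hD _ _ (φ.map_adj h), hy a b h])
      (fun a b h => by rw [hD a b h, mul_assoc, mul_assoc, mul_assoc])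
      (by group)
  rw [congrFun h v]
  group

theorem IsTree.exists_eq_mul_of_adj (hG : G.IsTree) (y : V → V → X)
    (hy : ∀ u w, G.Adj u w → y w u = (y u w)⁻¹) :
    ∃ D : V → X, ∀ u w, G.Adj u w → D w = y u w * D u := by
  obtain ⟨r⟩ := hG.connected.nonempty
  choose P hP using fun v => (hG.existsUnique_path r v).exists
  let D v := ((P v).darts.map fun d => y d.fst d.snd).reverse.prod
  have hconcat : ∀ u w (h : G.Adj u w), P w = (P u).concat h → D w = y u w * D u := by
    intro u w h hw
    simp [D, hw, Walk.darts_concat]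
  refine ⟨D, fun u w h => ?_⟩
  by_cases hu : u ∈ (P w).support
  · exact hconcat u w h (hG.isAcyclic.path_concat (hP u) (hP w) h hu)
  · have hw := hG.isAcyclic.mem_support_of_ne_mem_support_of_adj_of_isPath (hP u) (hP w) h hu
    rw [hconcat w u h.symm (hG.isAcyclic.path_concat (hP w) (hP u) h.symm hw), hy w u h.symm]
    group

end SimpleGraph

universe u w

/-- A morphism `γ : a ⟶ b` stands for the orbit of the pairs `(u, w) ∈ a × b` with
`(orbitShift Γ u)⁻¹ * orbitShift Γ w = γ` (see `homOfPair`). -/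
structure OrbitGroupoid (Γ : Type w) (V : Type u) [Group Γ] [MulAction Γ V] : Type max u w where
  orbit : orbitRel.Quotient Γ V

namespace OrbitGroupoid

variable {Γ : Type w} {V : Type u} [Group Γ] [MulAction Γ V]

instance : Groupoid (OrbitGroupoid Γ V) where
  Hom _ _ := ULift.{u} Γ
  id _ := ⟨1⟩
  comp p q := ⟨p.down * q.down⟩
  id_comp _ := ULift.ext _ _ (one_mul _)
  comp_id _ := ULift.ext _ _ (mul_one _)
  assoc _ _ _ := ULift.ext _ _ (mul_assoc _ _ _)
  inv p := ⟨p.down⁻¹⟩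
  inv_comp _ := ULift.ext _ _ (inv_mul_cancel _)
  comp_inv _ := ULift.ext _ _ (mul_inv_cancel _)

instance [Nonempty V] : IsConnected (OrbitGroupoid Γ V) :=
  have : Nonempty (OrbitGroupoid Γ V) := ⟨⟨⟦Classical.arbitrary V⟧⟩⟩
  zigzag_isConnected fun _ _ => .single (.inl ⟨(⟨1⟩ : ULift Γ)⟩)

@[simp] theorem comp_down {x y z : OrbitGroupoid Γ V} (p : x ⟶ y) (q : y ⟶ z) :
    (p ≫ q).down = p.down * q.down := rfl

def endMulEquiv (x : OrbitGroupoid Γ V) : End x ≃* Γ where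
  toFun p := p.down⁻¹
  invFun γ := ⟨γ⁻¹⟩
  left_inv p := ULift.ext _ _ (inv_inv p.down)
  right_inv := inv_inv
  map_mul' p q := mul_inv_rev q.down p.down

noncomputable def homOfPair (u w : V) : (⟨⟦u⟧⟩ : OrbitGroupoid Γ V) ⟶ ⟨⟦w⟧⟩ :=
  ⟨(orbitShift Γ u)⁻¹ * orbitShift Γ w⟩

@[simp] theorem homOfPair_self (u : V) : homOfPair (Γ := Γ) u u = 𝟙 _ :=
  ULift.ext _ _ (inv_mul_cancel _)

@[simp] theorem homOfPair_comp (u v w : V) :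
    homOfPair (Γ := Γ) u v ≫ homOfPair v w = homOfPair u w :=
  ULift.ext _ _ (by simp only [homOfPair, comp_down]; group)

theorem homOfPair_smul (hfree : ∀ v : V, Injective fun γ : Γ => γ • v) (γ : Γ) (u w : V) :
    (homOfPair (Γ := Γ) (γ • u) (γ • w)).down = (homOfPair u w).down := by
  simp only [homOfPair, orbitShift_smul hfree, mul_inv_rev]
  group

variable (Γ) in
def IsPositive (u w : V) : Prop :=
  WellOrderingRel (⟦(u, w)⟧ : orbitRel.Quotient Γ (V × V)) ⟦(w, u)⟧

theorem isPositive_smul (γ : Γ) (u w : V) : IsPositive Γ (γ • u) (γ • w) ↔ IsPositive Γ u w := by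
  simp only [IsPositive, orbitRel.Quotient.quotient_smul_pair_eq]

theorem IsPositive.not_swap {u w : V} (h : IsPositive Γ u w) : ¬IsPositive Γ w u :=
  asymm_of WellOrderingRel h

theorem map_homOfPair_swap {X : Type*} [Group X] (F : OrbitGroupoid Γ V ⥤ SingleObj X) (u w : V) :
    F.map (homOfPair w u) = (F.map (homOfPair u w))⁻¹ := by
  refine eq_inv_of_mul_eq_one_left ?_
  rw [← SingleObj.comp_as_mul, ← F.map_comp, homOfPair_comp, homOfPair_self, F.map_id,
    SingleObj.id_as_one]

variable {G : SimpleGraph V}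

theorem isPositive_or_swap_of_adj
    (hinv : ∀ (γ : Γ) (u w : V), G.Adj u w → ¬(γ • u = w ∧ γ • w = u)) {u w : V}
    (h : G.Adj u w) : IsPositive Γ u w ∨ IsPositive Γ w u := by
  have hne : (⟦(u, w)⟧ : orbitRel.Quotient Γ (V × V)) ≠ ⟦(w, u)⟧ := fun heq =>
    have ⟨γ, hγ⟩ := Quotient.exact heq
    hinv γ u w h ⟨congrArg Prod.snd hγ, congrArg Prod.fst hγ⟩
  exact (trichotomous_of WellOrderingRel _ _).imp_right (Or.resolve_left · hne)

theorem exists_functor_map_homOfPair (hT : G.IsTree)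
    (hadj : ∀ (γ : Γ) (u w : V), G.Adj (γ • u) (γ • w) ↔ G.Adj u w)
    (hinv : ∀ (γ : Γ) (u w : V), G.Adj u w → ¬(γ • u = w ∧ γ • w = u))
    {X : Type*} [Group X] (lab : orbitRel.Quotient Γ (V × V) → X) :
    ∃ F : OrbitGroupoid Γ V ⥤ SingleObj X,
      ∀ u w, G.Adj u w → IsPositive Γ u w → F.map (homOfPair u w) = lab ⟦(u, w)⟧ := by
  classical
  let y (u w : V) : X := if IsPositive Γ u w then lab ⟦(u, w)⟧ else (lab ⟦(w, u)⟧)⁻¹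
  have hy_swap (u w : V) (h : G.Adj u w) : y w u = (y u w)⁻¹ := by
    rcases isPositive_or_swap_of_adj hinv h with hp | hp <;> simp [y, hp, hp.not_swap]
  have hy_smul (γ : Γ) (u w : V) : y (γ • u) (γ • w) = y u w := by
    simp only [y, isPositive_smul, orbitRel.Quotient.quotient_smul_pair_eq]
  obtain ⟨D, hD⟩ := hT.exists_eq_mul_of_adj y hy_swap
  have hD_smul (γ : Γ) (u v : V) : D (γ • v) * (D (γ • u))⁻¹ = D v * (D u)⁻¹ :=
    hT.connected.preconnected.mul_inv_map_eq hD ⟨(γ • ·), (hadj γ _ _).mpr⟩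
      (fun u w _ => hy_smul γ u w) u v
  -- the product of `y` along the path from `a.orbit.out` to `p.down • b.orbit.out`
  refine ⟨{ obj := fun _ => SingleObj.star X
            map := fun {a b} p => D (p.down • b.orbit.out) * (D a.orbit.out)⁻¹
            map_id := fun a => mul_inv_eq_one.mpr (congrArg D (one_smul Γ a.orbit.out))
            map_comp := fun {a b c} p q => by
              rw [SingleObj.comp_as_mul, comp_down, mul_smul, ← hD_smul p.down b.orbit.out]
              group }, fun u w h hp => ?_⟩
  have hu : (⟦u⟧ : orbitRel.Quotient Γ V).out = (orbitShift Γ u)⁻¹ • u :=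
    eq_inv_smul_iff.mpr (orbitShift_smul_out u)
  dsimp only [homOfPair]
  rw [mul_smul, orbitShift_smul_out, hu, hD_smul, hD u w h, mul_inv_cancel_right]
  simp [y, hp]

theorem functor_ext (hG : G.Preconnected) (hfree : ∀ v : V, Injective fun γ : Γ => γ • v)
    {X : Type*} [Group X] {F F' : OrbitGroupoid Γ V ⥤ SingleObj X}
    (h : ∀ u w, G.Adj u w → F.map (homOfPair u w) = F'.map (homOfPair u w)) : F = F' := by
  have hpair (u v : V) : F.map (homOfPair u v) = F'.map (homOfPair u v) := by
    obtain ⟨p⟩ := hG u v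
    induction p with
    | nil => rw [homOfPair_self, F.map_id, F'.map_id]; rfl
    | cons hadj _ ih => rw [← homOfPair_comp, F.map_comp, F'.map_comp, h _ _ hadj, ih]
  have hmap (u v : V) (x y : OrbitGroupoid Γ V) (hx : x.orbit = ⟦u⟧) (hy : y.orbit = ⟦v⟧) :
      F.map (X := x) (Y := y) (homOfPair u v) = F'.map (X := x) (Y := y) (homOfPair u v) := by
    obtain ⟨x⟩ := x
    obtain ⟨y⟩ := y
    subst hx hy
    exact hpair u v
  refine Functor.hext (fun _ => rfl) fun ⟨a⟩ ⟨b⟩ ⟨γ⟩ => heq_of_eq ?_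
  have := hmap a.out (γ • b.out) ⟨a⟩ ⟨b⟩ a.out_eq.symm (by simp)
  simpa [homOfPair, orbitShift_out hfree, orbitShift_smul hfree] using this

def orbitFst : orbitRel.Quotient Γ (V × V) → orbitRel.Quotient Γ V :=
  Quotient.map Prod.fst fun _ _ ⟨γ, h⟩ => ⟨γ, congrArg Prod.fst h⟩

def orbitSnd : orbitRel.Quotient Γ (V × V) → orbitRel.Quotient Γ V :=
  Quotient.map Prod.snd fun _ _ ⟨γ, h⟩ => ⟨γ, congrArg Prod.snd h⟩

variable (G) in
structure PositiveEdgeOrbit (a b : OrbitGroupoid Γ V) : Type max u w where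
  orbit : orbitRel.Quotient Γ (V × V)
  exists_rep : ∃ u w, ⟦(u, w)⟧ = orbit ∧ G.Adj u w ∧ IsPositive Γ u w
  fst_eq : ⟨orbitFst orbit⟩ = a
  snd_eq : ⟨orbitSnd orbit⟩ = b

noncomputable def PositiveEdgeOrbit.toHom {a b : OrbitGroupoid Γ V} (e : PositiveEdgeOrbit G a b) :
    a ⟶ b :=
  ⟨(homOfPair e.orbit.out.1 e.orbit.out.2).down⟩

def PositiveEdgeOrbit.ofAdj {u w : V} (h : G.Adj u w) (hp : IsPositive Γ u w) :
    PositiveEdgeOrbit G (⟨⟦u⟧⟩ : OrbitGroupoid Γ V) ⟨⟦w⟧⟩ :=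
  ⟨⟦(u, w)⟧, ⟨u, w, rfl, h, hp⟩, rfl, rfl⟩

theorem PositiveEdgeOrbit.toHom_ofAdj (hfree : ∀ v : V, Injective fun γ : Γ => γ • v) {u w : V}
    (h : G.Adj u w) (hp : IsPositive Γ u w) : (ofAdj h hp).toHom = homOfPair u w := by
  obtain ⟨γ, hγ⟩ := Quotient.mk_out (s := orbitRel Γ (V × V)) (u, w)
  exact ULift.ext _ _ (by rw [toHom, ofAdj, ← hγ]; exact homOfPair_smul hfree γ u w)

noncomputable abbrev isFreeGroupoid (hT : G.IsTree)
    (hadj : ∀ (γ : Γ) (u w : V), G.Adj (γ • u) (γ • w) ↔ G.Adj u w)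
    (hinv : ∀ (γ : Γ) (u w : V), G.Adj u w → ¬(γ • u = w ∧ γ • w = u))
    (hfree : ∀ v : V, Injective fun γ : Γ => γ • v) :
    IsFreeGroupoid (OrbitGroupoid Γ V) where
  quiverGenerators := ⟨PositiveEdgeOrbit G⟩
  of := PositiveEdgeOrbit.toHom
  unique_lift {X} _ f := by
    classical
    let lab (q : orbitRel.Quotient Γ (V × V)) : X :=
      if h : ∃ u w, ⟦(u, w)⟧ = q ∧ G.Adj u w ∧ IsPositive Γ u w then
        f (a := ⟨orbitFst q⟩) (b := ⟨orbitSnd q⟩) ⟨q, h, rfl, rfl⟩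
      else 1
    obtain ⟨F, hF⟩ := exists_functor_map_homOfPair hT hadj hinv lab
    have hlab (F' : OrbitGroupoid Γ V ⥤ SingleObj X)
        (hF' : ∀ a b (g : PositiveEdgeOrbit G a b), F'.map g.toHom = f g) (u w : V)
        (h : G.Adj u w) (hp : IsPositive Γ u w) : lab ⟦(u, w)⟧ = F'.map (homOfPair u w) := by
      rw [← PositiveEdgeOrbit.toHom_ofAdj hfree h hp, hF']
      exact dif_pos _
    refine ⟨F, ?_, fun F' hF' => functor_ext hT.connected.preconnected hfree fun u w h => ?_⟩
    · rintro _ _ ⟨_, ⟨u, w, rfl, h, hp⟩, rfl, rfl⟩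
      show F.map (PositiveEdgeOrbit.ofAdj h hp).toHom = f (PositiveEdgeOrbit.ofAdj h hp)
      rw [PositiveEdgeOrbit.toHom_ofAdj hfree, hF u w h hp]
      exact dif_pos _
    · rcases isPositive_or_swap_of_adj hinv h with hp | hp
      · rw [hF u w h hp, hlab F' hF' u w h hp]
      · rw [map_homOfPair_swap F' w u, map_homOfPair_swap F w u, hF w u h.symm hp,
          hlab F' hF' w u h.symm hp]

end OrbitGroupoid

theorem exists_set_mulEquiv_freeGroup {Γ T : Type*} [Group Γ] (e : Γ ≃* FreeGroup T) :
    ∃ S : Set Γ, Nonempty (Γ ≃* FreeGroup S) :=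
  let b := FreeGroupBasis.ofRepr e
  ⟨Set.range b, ⟨(b.reindex (Equiv.ofInjective b b.injective)).repr⟩⟩

theorem group_acting_freely_on_tree_is_free_general {V : Type*} (G : SimpleGraph V)
    (hT : G.IsTree)
    (Γ : Type*) [Group Γ] [MulAction Γ V]
    (hact : ∀ (γ : Γ) (u v : V), G.Adj (γ • u) (γ • v) ↔ G.Adj u v)
    (hni : ∀ (γ : Γ) (u v : V), G.Adj u v → ¬(γ • u = v ∧ γ • v = u))
    (hhyp : ∀ γ : Γ, γ ≠ 1 → ∀ v : V, γ • v ≠ v) :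
    ∃ S : Set Γ, Nonempty (Γ ≃* FreeGroup S) := by
  have hfree (v : V) : Injective fun γ : Γ => γ • v := fun γ δ (h : γ • v = δ • v) => by
    by_contra hne
    exact hhyp (δ⁻¹ * γ) (by rwa [ne_eq, inv_mul_eq_one, eq_comm]) v
      (by rw [mul_smul, h, inv_smul_smul])
  have : Nonempty V := hT.connected.nonempty
  let := OrbitGroupoid.isFreeGroupoid hT hact hni hfree
  let x : OrbitGroupoid Γ V := ⟨⟦Classical.arbitrary V⟧⟩
  exact exists_set_mulEquiv_freeGroup
    ((OrbitGroupoid.endMulEquiv x).symm.trans (IsFreeGroup.toFreeGroup (End x)))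

/-- Let `T` be a locally finite tree and `Γ` a group acting on `T` by isometries
(graph automorphisms) without inversion, such that every non-identity element of `Γ`
is hyperbolic (fixes no vertex). Then `Γ` is a free group. -/
theorem group_acting_freely_on_tree_is_free {V : Type*} (G : SimpleGraph V)
    (hT : G.IsTree) [G.LocallyFinite]
    (Γ : Type*) [Group Γ] [MulAction Γ V]
    (hact : ∀ (γ : Γ) (u v : V), G.Adj (γ • u) (γ • v) ↔ G.Adj u v)
    (hni : ∀ (γ : Γ) (u v : V), G.Adj u v → ¬(γ • u = v ∧ γ • v = u))
    (hhyp : ∀ γ : Γ, γ ≠ 1 → ∀ v : V, γ • v ≠ v) :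
    ∃ S : Set Γ, Nonempty (Γ ≃* FreeGroup S) :=
  group_acting_freely_on_tree_is_free_general G hT Γ hact hni hhyp
end
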